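/- For every natural number n ≥ 3, the helm graph H_n admits an equitable proper coloring using exactly 4 colors. -/
import Mathlib


open Finset

/-- The size of the color class of color `i` under the coloring `c`. -/
def classSize {V : Type*} [Fintype V] {k : ℕ} (c : V → Fin k) (i : Fin k) : ℕ :=
  (Finset.univ.filter (fun v => c v = i)).card

/-- The equitable coloring mean `μ = (∑ i·θ_i)/N` (colors indexed `1,…,k`). -/
def eqMean {V : Type*} [Fintype V] {k : ℕ} (c : V → Fin k) : ℚ :=
  (∑ i : Fin k, (((i : ℕ) : ℚ) + 1) * (classSize c i : ℚ)) / (Fintype.card V : ℚ)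

/-- The equitable coloring variance `σ² = (∑ i²·θ_i)/N − μ²`. -/
def eqVar {V : Type*} [Fintype V] {k : ℕ} (c : V → Fin k) : ℚ :=
  (∑ i : Fin k, (((i : ℕ) : ℚ) + 1) ^ 2 * (classSize c i : ℚ)) / (Fintype.card V : ℚ)
    - (eqMean c) ^ 2

/-- The helm graph `H_n`: `none` is the central vertex, `some (Sum.inl i)` the rim
vertices `v_i`, `some (Sum.inr i)` the pendant vertices `u_i`. -/
def helmGraph (n : ℕ) : SimpleGraph (Option (Fin n ⊕ Fin n)) :=
  SimpleGraph.fromRel (fun a b =>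
    match a, b with
    | none, some (Sum.inl _) => True
    | some (Sum.inl i), some (Sum.inl j) => j.val = (i.val + 1) % n
    | some (Sum.inl i), some (Sum.inr j) => i = j
    | _, _ => False)

/-- Rim colors: alternate 0,1; last rim vertex gets 2 when `n` is odd. -/
def rimN (n i : ℕ) : ℕ := if i = n - 1 ∧ n % 2 = 1 then 2 else i % 2

/-- Pendant colors: alternate 2,3; last pendant gets 0 when `n` is odd. -/
def penN (n i : ℕ) : ℕ := if i = n - 1 ∧ n % 2 = 1 then 0 else 2 + i % 2

def helmN (n : ℕ) : Option (Fin n ⊕ Fin n) → ℕ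
  | none => 3
  | some (Sum.inl i) => rimN n i.val
  | some (Sum.inr i) => penN n i.val

lemma helmN_lt (n : ℕ) (x : Option (Fin n ⊕ Fin n)) : helmN n x < 4 := by
  rcases x with _ | (i | i)
  · simp [helmN]
  · simp only [helmN, rimN]; split_ifs <;> omega
  · simp only [helmN, penN]; split_ifs <;> omega

def helmC (n : ℕ) (x : Option (Fin n ⊕ Fin n)) : Fin 4 := ⟨helmN n x, helmN_lt n x⟩

lemma rim_ne (n : ℕ) (hn : 3 ≤ n) (i j : Fin n) (h : j.val = (i.val + 1) % n) :
    rimN n i.val ≠ rimN n j.val := by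
  have hi := i.isLt; have hj := j.isLt
  rcases eq_or_ne (i.val + 1) n with he | he
  · rw [he, Nat.mod_self] at h
    simp only [rimN]; split_ifs <;> omega
  · rw [Nat.mod_eq_of_lt (by omega)] at h
    simp only [rimN]; split_ifs <;> omega

lemma sumA (c : ℕ) (m : ℕ) :
    ∑ i ∈ Finset.range m, (if i % 2 = c then (1:ℕ) else 0)
      = if c = 0 then (m+1)/2 else if c = 1 then m/2 else 0 := by
  induction m with
  | zero => simp
  | succ k ih => rw [Finset.sum_range_succ, ih]; split_ifs <;> omega

lemma sumB (c : ℕ) (m : ℕ) :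
    ∑ i ∈ Finset.range m, (if 2 + i % 2 = c then (1:ℕ) else 0)
      = if c = 2 then (m+1)/2 else if c = 3 then m/2 else 0 := by
  induction m with
  | zero => simp
  | succ k ih => rw [Finset.sum_range_succ, ih]; split_ifs <;> omega

lemma classSize_helmC_bounds (n : ℕ) (hn : 3 ≤ n) (col : Fin 4) :
    n / 2 ≤ classSize (helmC n) col ∧ classSize (helmC n) col ≤ n / 2 + 1 := by
  obtain ⟨m, rfl⟩ : ∃ m, n = m + 1 := ⟨n - 1, by omega⟩
  have hm : 2 ≤ m := by omega
  have hcol := col.isLt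
  have hkey : classSize (helmC (m+1)) col =
      (if 3 = col.val then 1 else 0)
      + (((if col.val = 0 then (m+1)/2 else if col.val = 1 then m/2 else 0)
          + (if (m+1) % 2 = 1 then (if 2 = col.val then 1 else 0)
             else (if m % 2 = col.val then 1 else 0)))
         + ((if col.val = 2 then (m+1)/2 else if col.val = 3 then m/2 else 0)
            + (if (m+1) % 2 = 1 then (if 0 = col.val then 1 else 0)
               else (if 2 + m % 2 = col.val then 1 else 0)))) := by
    unfold classSize
    rw [Finset.card_filter, Fintype.sum_option, Fintype.sum_sum_type]
    simp only [helmC, helmN, Fin.ext_iff]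
    rw [Fin.sum_univ_eq_sum_range (fun j => if rimN (m+1) j = col.val then (1:ℕ) else 0)]
    rw [Fin.sum_univ_eq_sum_range (fun j => if penN (m+1) j = col.val then (1:ℕ) else 0)]
    rw [Finset.sum_range_succ, Finset.sum_range_succ]
    have h1 : ∑ i ∈ Finset.range m, (if rimN (m+1) i = col.val then (1:ℕ) else 0)
        = ∑ i ∈ Finset.range m, (if i % 2 = col.val then (1:ℕ) else 0) := by
      refine Finset.sum_congr rfl fun i hi => ?_
      simp only [Finset.mem_range] at hi
      have hc : ¬(i = m + 1 - 1 ∧ (m + 1) % 2 = 1) := by omega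
      simp only [rimN, if_neg hc]
    have h2 : ∑ i ∈ Finset.range m, (if penN (m+1) i = col.val then (1:ℕ) else 0)
        = ∑ i ∈ Finset.range m, (if 2 + i % 2 = col.val then (1:ℕ) else 0) := by
      refine Finset.sum_congr rfl fun i hi => ?_
      simp only [Finset.mem_range] at hi
      have hc : ¬(i = m + 1 - 1 ∧ (m + 1) % 2 = 1) := by omega
      simp only [penN, if_neg hc]
    have h3 : (if rimN (m+1) m = col.val then (1:ℕ) else 0)
        = if (m+1) % 2 = 1 then (if 2 = col.val then (1:ℕ) else 0)
          else (if m % 2 = col.val then (1:ℕ) else 0) := by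
      by_cases hp : (m+1) % 2 = 1 <;> simp [rimN, hp]
    have h4 : (if penN (m+1) m = col.val then (1:ℕ) else 0)
        = if (m+1) % 2 = 1 then (if 0 = col.val then (1:ℕ) else 0)
          else (if 2 + m % 2 = col.val then (1:ℕ) else 0) := by
      by_cases hp : (m+1) % 2 = 1 <;> simp [penN, hp]
    rw [h1, h2, h3, h4, sumA, sumB]
  rw [hkey]
  split_ifs <;> omega

theorem helm_equitable_four_coloring (n : ℕ) (hn : 3 ≤ n) :
    ∃ c : Option (Fin n ⊕ Fin n) → Fin (4),
        (∀ u v, (helmGraph n).Adj u v → c u ≠ c v) ∧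
        Function.Surjective c ∧
        (∀ i j : Fin (4), classSize c i ≤ classSize c j + 1) := by
  refine ⟨helmC n, ?_, ?_, ?_⟩
  · intro u v h
    rw [helmGraph, SimpleGraph.fromRel_adj] at h
    obtain ⟨hne, h⟩ := h
    rcases u with _ | (i | i) <;> rcases v with _ | (j | j) <;> simp only [] at h
    · simp at h
    · -- none, inl j
      have hj := j.isLt
      have hne' : (3:ℕ) ≠ rimN n j.val := by
        simp only [rimN]; split_ifs <;> omega
      simpa [helmC, helmN, Fin.ext_iff] using hne' 
    · simp at h
    · -- inl i, none
      have hi := i.isLt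
      have hne' : rimN n i.val ≠ (3:ℕ) := by
        simp only [rimN]; split_ifs <;> omega
      simpa [helmC, helmN, Fin.ext_iff] using hne' 
    · -- inl i, inl j
      rcases h with h | h
      · have := rim_ne n hn i j h
        simpa [helmC, helmN, Fin.ext_iff] using this
      · have := (rim_ne n hn j i h).symm
        simpa [helmC, helmN, Fin.ext_iff] using this
    · -- inl i, inr j
      have hij : i = j := by tauto
      subst hij
      have hi := i.isLt
      have hne' : rimN n i.val ≠ penN n i.val := by
        simp only [rimN, penN]; split_ifs <;> omega
      simpa [helmC, helmN, Fin.ext_iff] using hne' 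
    · simp at h
    · -- inr i, inl j
      have hij : j = i := by tauto
      subst hij
      have hj := j.isLt
      have hne' : penN n j.val ≠ rimN n j.val := by
        simp only [rimN, penN]; split_ifs <;> omega
      simpa [helmC, helmN, Fin.ext_iff] using hne' 
    · simp at h
  · intro y
    rcases y with ⟨yv, hy⟩
    interval_cases yv
    · refine ⟨some (Sum.inl ⟨0, by omega⟩), ?_⟩
      have hc : ¬((0:ℕ) = n - 1 ∧ n % 2 = 1) := by omega
      simp [helmC, helmN, rimN, hc, Fin.ext_iff]
    · refine ⟨some (Sum.inl ⟨1, by omega⟩), ?_⟩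
      have hc : ¬((1:ℕ) = n - 1 ∧ n % 2 = 1) := by omega
      simp [helmC, helmN, rimN, hc, Fin.ext_iff]
    · refine ⟨some (Sum.inr ⟨0, by omega⟩), ?_⟩
      have hc : ¬((0:ℕ) = n - 1 ∧ n % 2 = 1) := by omega
      simp [helmC, helmN, penN, hc, Fin.ext_iff]
    · exact ⟨none, rfl⟩
  · intro i j
    have b1 := classSize_helmC_bounds n hn i
    have b2 := classSize_helmC_bounds n hn j
    omega
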